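/- For fixed L > 0 and q = Q⁻¹(ε) > 0, the map γ ↦ [ (q·√(V(γ)) + √(V(γ)q² + 4L log₂(1+γ)) ) / (2 log₂(1+γ)) ]² is strictly decreasing in γ on (0, ∞), where V(γ) = (1 − 1/(1+γ)²)(log₂ e)². -/

import Mathlib

open Real Set

noncomputable def gfun (x : ℝ) : ℝ := (1 - (x ^ 2)⁻¹) / (Real.log x) ^ 2

lemma gfun_pos {x : ℝ} (hx : 1 < x) : 0 < gfun x := by
  have hl : 0 < Real.log x := Real.log_pos hx
  have h1 : (x ^ 2)⁻¹ < 1 := by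
    rw [inv_lt_one_iff₀]
    right
    nlinarith
  exact div_pos (by linarith) (by positivity)

lemma gfun_anti : StrictAntiOn gfun (Set.Ioi (1 : ℝ)) := by
  have hderiv : ∀ x ∈ interior (Set.Ioi (1 : ℝ)),
      HasDerivAt gfun
        (((2 * x / (x ^ 2) ^ 2) * (Real.log x) ^ 2
          - (1 - (x ^ 2)⁻¹) * (2 * Real.log x ^ 1 * (1 / x))) / ((Real.log x) ^ 2) ^ 2) x := by
    intro x hx
    rw [interior_Ioi] at hx
    have hx1 : (1 : ℝ) < x := hx
    have hx0 : x ≠ 0 := by positivity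
    have hl : 0 < Real.log x := Real.log_pos hx1
    have h1 : HasDerivAt (fun y : ℝ => (y ^ 2)⁻¹) (-(2 * x) / (x ^ 2) ^ 2) x := by
      have := (hasDerivAt_pow 2 x).inv (by positivity)
      simp at this ⊢; exact this
    have h2 : HasDerivAt (fun y : ℝ => 1 - (y ^ 2)⁻¹) (2 * x / (x ^ 2) ^ 2) x := by
      have := (hasDerivAt_const x (1 : ℝ)).sub h1
      simp [neg_div] at this ⊢; exact this
    have h3 : HasDerivAt (fun y : ℝ => (Real.log y) ^ 2) (2 * Real.log x ^ 1 * (1 / x)) x := by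
      have := (Real.hasDerivAt_log hx0).pow 2
      simp at this ⊢; exact this
    exact h2.div h3 (by positivity)
  apply strictAntiOn_of_deriv_neg (convex_Ioi 1)
  · apply ContinuousOn.div
    · exact continuousOn_const.sub ((continuousOn_pow 2).inv₀ (fun x hx => by
        have : (1:ℝ) < x := hx; positivity))
    · exact (Real.continuousOn_log.mono (fun x hx => by
        have : (1:ℝ) < x := hx
        simp only [Set.mem_compl_iff, Set.mem_singleton_iff]
        positivity)).pow 2
    · intro x hx
      have h1 : (1:ℝ) < x := hx
      have h2 := Real.log_pos h1
      positivity
  · intro x hx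
    rw [(hderiv x hx).deriv]
    rw [interior_Ioi] at hx
    have hx1 : (1 : ℝ) < x := hx
    have hx0 : (0:ℝ) < x := by linarith
    have hl : 0 < Real.log x := Real.log_pos hx1
    have hlog : Real.log x < x ^ 2 - 1 := by
      have h := Real.log_lt_sub_one_of_pos hx0 (by linarith)
      nlinarith
    apply div_neg_of_neg_of_pos
    · have hfact : (2 * x / (x ^ 2) ^ 2) * (Real.log x) ^ 2
          - (1 - (x ^ 2)⁻¹) * (2 * Real.log x ^ 1 * (1 / x))
          = (2 * Real.log x / x ^ 3) * (Real.log x - (x ^ 2 - 1)) := by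
        field_simp
      rw [hfact]
      exact mul_neg_of_pos_of_neg (by positivity) (by linarith)
    · positivity

/-- The minimum blocklength n(γ, L, ε) given by (36) is strictly decreasing in the SNR γ
on (0, ∞). Here q stands for Q⁻¹(ε) > 0. -/
theorem stmt_10 (L q : ℝ) (hL : 0 < L) (hq : 0 < q)
    (V : ℝ → ℝ) (hV : ∀ γ : ℝ, V γ = (1 - 1 / (1 + γ) ^ 2) * (Real.logb 2 (Real.exp 1)) ^ 2) :
    StrictAntiOn
      (fun γ : ℝ =>
        ((q * Real.sqrt (V γ)
            + Real.sqrt (V γ * q ^ 2 + 4 * L * Real.logb 2 (1 + γ)))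
          / (2 * Real.logb 2 (1 + γ))) ^ 2)
      (Set.Ioi (0 : ℝ)) := by
  have hlog2 : (0:ℝ) < Real.log 2 := Real.log_pos (by norm_num)
  have key : ∀ γ : ℝ, 0 < γ →
      ((q * Real.sqrt (V γ)
            + Real.sqrt (V γ * q ^ 2 + 4 * L * Real.logb 2 (1 + γ)))
          / (2 * Real.logb 2 (1 + γ))) ^ 2
      = (q * Real.sqrt (gfun (1 + γ)) / 2
          + Real.sqrt (q ^ 2 * gfun (1 + γ) / 4 + L * Real.log 2 / Real.log (1 + γ))) ^ 2 := by
    intro γ hγ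
    have hx1 : (1:ℝ) < 1 + γ := by linarith
    have hl : 0 < Real.log (1 + γ) := Real.log_pos hx1
    have hA : (0:ℝ) < 1 - ((1 + γ) ^ 2)⁻¹ := by
      have : ((1 + γ) ^ 2)⁻¹ < 1 := by
        rw [inv_lt_one_iff₀]; right; nlinarith
      linarith
    have hVγ : V γ = (1 - ((1 + γ) ^ 2)⁻¹) / (Real.log 2) ^ 2 := by
      rw [hV, Real.logb, Real.log_exp]
      field_simp
    have hC : Real.logb 2 (1 + γ) = Real.log (1 + γ) / Real.log 2 := rfl
    have hCpos : 0 < Real.logb 2 (1 + γ) := by rw [hC]; positivity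
    have hsV : Real.sqrt (V γ) = Real.sqrt (1 - ((1 + γ) ^ 2)⁻¹) / Real.log 2 := by
      rw [hVγ, Real.sqrt_div hA.le, Real.sqrt_sq hlog2.le]
    have hsg : Real.sqrt (gfun (1 + γ))
        = Real.sqrt (1 - ((1 + γ) ^ 2)⁻¹) / Real.log (1 + γ) := by
      rw [gfun, Real.sqrt_div hA.le, Real.sqrt_sq hl.le]
    have hVq : 0 ≤ V γ * q ^ 2 + 4 * L * Real.logb 2 (1 + γ) := by
      have : 0 < V γ := by rw [hVγ]; positivity
      positivity
    have hterm2 : Real.sqrt (V γ * q ^ 2 + 4 * L * Real.logb 2 (1 + γ))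
          / (2 * Real.logb 2 (1 + γ))
        = Real.sqrt (q ^ 2 * gfun (1 + γ) / 4 + L * Real.log 2 / Real.log (1 + γ)) := by
      have h2C : (0:ℝ) < 2 * Real.logb 2 (1 + γ) := by linarith
      rw [show Real.sqrt (V γ * q ^ 2 + 4 * L * Real.logb 2 (1 + γ))
            / (2 * Real.logb 2 (1 + γ))
          = Real.sqrt ((V γ * q ^ 2 + 4 * L * Real.logb 2 (1 + γ))
            / (2 * Real.logb 2 (1 + γ)) ^ 2) by
        rw [Real.sqrt_div hVq, Real.sqrt_sq h2C.le]]
      congr 1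
      rw [hVγ, hC, gfun]
      field_simp
      ring
    rw [add_div, hterm2]
    congr 2
    rw [hsV, hsg, hC]
    field_simp
  intro γ₁ h₁ γ₂ h₂ hlt
  simp only [Set.mem_Ioi] at h₁ h₂
  dsimp only
  rw [key γ₁ h₁, key γ₂ h₂]
  have hx1 : (1:ℝ) < 1 + γ₁ := by linarith
  have hx2 : (1:ℝ) < 1 + γ₂ := by linarith
  have hg : gfun (1 + γ₂) < gfun (1 + γ₁) :=
    gfun_anti (Set.mem_Ioi.mpr hx1) (Set.mem_Ioi.mpr hx2) (by linarith)
  have hg2 : 0 < gfun (1 + γ₂) := gfun_pos hx2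
  have hl1 : 0 < Real.log (1 + γ₁) := Real.log_pos hx1
  have hl2 : 0 < Real.log (1 + γ₂) := Real.log_pos hx2
  have hll : Real.log (1 + γ₁) < Real.log (1 + γ₂) :=
    Real.log_lt_log (by linarith) (by linarith)
  have hm : L * Real.log 2 / Real.log (1 + γ₂) < L * Real.log 2 / Real.log (1 + γ₁) :=
    div_lt_div_of_pos_left (by positivity) hl1 hll
  have hsqg : Real.sqrt (gfun (1 + γ₂)) < Real.sqrt (gfun (1 + γ₁)) :=
    Real.sqrt_lt_sqrt hg2.le hg
  have hin : q ^ 2 * gfun (1 + γ₂) / 4 + L * Real.log 2 / Real.log (1 + γ₂)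
      < q ^ 2 * gfun (1 + γ₁) / 4 + L * Real.log 2 / Real.log (1 + γ₁) := by
    have : q ^ 2 * gfun (1 + γ₂) < q ^ 2 * gfun (1 + γ₁) := by
      exact mul_lt_mul_of_pos_left hg (by positivity)
    linarith
  have hin2 : 0 ≤ q ^ 2 * gfun (1 + γ₂) / 4 + L * Real.log 2 / Real.log (1 + γ₂) := by
    positivity
  have hsum : q * Real.sqrt (gfun (1 + γ₂)) / 2
        + Real.sqrt (q ^ 2 * gfun (1 + γ₂) / 4 + L * Real.log 2 / Real.log (1 + γ₂))
      < q * Real.sqrt (gfun (1 + γ₁)) / 2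
        + Real.sqrt (q ^ 2 * gfun (1 + γ₁) / 4 + L * Real.log 2 / Real.log (1 + γ₁)) := by
    have h1 : q * Real.sqrt (gfun (1 + γ₂)) / 2 < q * Real.sqrt (gfun (1 + γ₁)) / 2 := by
      have := mul_lt_mul_of_pos_left hsqg hq
      linarith
    have h2 := Real.sqrt_lt_sqrt hin2 hin
    linarith
  have hA2 : 0 ≤ q * Real.sqrt (gfun (1 + γ₂)) / 2
        + Real.sqrt (q ^ 2 * gfun (1 + γ₂) / 4 + L * Real.log 2 / Real.log (1 + γ₂)) := by
    positivity
  exact pow_lt_pow_left₀ hsum hA2 (by norm_num)
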